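/- Let 1 ≤ p < ∞ and let ℓ_p^2 denote the real space ℝ² with the p-norm. Then (1/2)·M_p ≤ n(ℓ_p^2) ≤ M_p, where M_p = sup_{t∈[0,1]} |t^{p-1} − t|/(1 + t^p). -/

import Mathlib

open MeasureTheory NormedSpace Metric Filter
open scoped ENNReal NNReal Topology

/-- The numerical radius of a bounded linear operator `T` on a normed space `X`:
`v(T) = sup {‖x*(Tx)‖ : ‖x‖ = ‖x*‖ = x*(x) = 1}`. -/
noncomputable def numRadius (𝕜 : Type*) [RCLike 𝕜] (X : Type*) [NormedAddCommGroup X]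
    [NormedSpace 𝕜 X] (T : X →L[𝕜] X) : ℝ :=
  sSup {r : ℝ | ∃ (x : X) (f : StrongDual 𝕜 X),
    ‖x‖ = 1 ∧ ‖f‖ = 1 ∧ f x = 1 ∧ r = ‖f (T x)‖}

/-- The numerical index of a normed space `X`:
`n(X) = inf {v(T) : T ∈ L(X), ‖T‖ = 1}`. -/
noncomputable def numIndex (𝕜 : Type*) [RCLike 𝕜] (X : Type*) [NormedAddCommGroup X]
    [NormedSpace 𝕜 X] : ℝ :=
  sInf {r : ℝ | ∃ T : X →L[𝕜] X, ‖T‖ = 1 ∧ r = numRadius 𝕜 X T}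

/-!
Write `M_p` (`lpTwoConst p`) for the supremum and `v(T)` for the numerical radius.

Lower bound. Let `T` have matrix `(a b; c d)` and `‖T‖ = 1`. For `0 ≤ t` the unit vectors
proportional to `(1, ±t)` and `(t, ±1)` are normed by the functionals proportional to
`(1, ±t^(p-1))` and `(t^(p-1), ±1)` (Hölder). Evaluating `T` on these pairs and comparing the
two signs gives `|a|, |d| ≤ v(T)` and `|t^(p-1) - t| · max(|b|, |c|) ≤ v(T) (1 + t^p)`, hence
`M_p · max(|b|, |c|) ≤ v(T)`. Since `1 = ‖T‖ ≤ max(|a|, |d|) + max(|b|, |c|)` and `M_p ≤ 1`,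
`M_p ≤ 2 v(T)`.

Upper bound. The rotation `R(y₀, y₁) = (-y₁, y₀)` has norm one. For `p > 1` the norm is
differentiable, and a functional norming `x` must be its derivative there, so
`f(Rx) = x₀x₁(|x₁|^(p-2) - |x₀|^(p-2))`; with `t ≤ 1` the ratio of the smaller to the larger
of `|x₀|, |x₁|`, this is `±(t^(p-1) - t)/(1 + t^p)`. For `p = 1`, `M_1 = 1 = ‖R‖`.
-/

section General

variable {𝕜 : Type*} [RCLike 𝕜] {X : Type*} [NormedAddCommGroup X] [NormedSpace 𝕜 X]

theorem norm_apply_apply_le_opNorm (T : X →L[𝕜] X) {x : X} {f : StrongDual 𝕜 X} (hx : ‖x‖ = 1)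
    (hf : ‖f‖ = 1) : ‖f (T x)‖ ≤ ‖T‖ := by
  simpa [hx, hf] using f.le_opNorm_of_le (T.le_opNorm x)

theorem numRadius_le_of_forall (T : X →L[𝕜] X) {C : ℝ} (hC : 0 ≤ C)
    (h : ∀ (x : X) (f : StrongDual 𝕜 X), ‖x‖ = 1 → ‖f‖ = 1 → f x = 1 → ‖f (T x)‖ ≤ C) :
    numRadius 𝕜 X T ≤ C :=
  Real.sSup_le (fun _ ⟨x, f, hx, hf, hfx, hr⟩ => hr ▸ h x f hx hf hfx) hC

theorem numRadius_le_opNorm (T : X →L[𝕜] X) : numRadius 𝕜 X T ≤ ‖T‖ :=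
  numRadius_le_of_forall T (norm_nonneg T) fun _ _ hx hf _ => norm_apply_apply_le_opNorm T hx hf

theorem numRadius_nonneg (T : X →L[𝕜] X) : 0 ≤ numRadius 𝕜 X T :=
  Real.sSup_nonneg fun _ ⟨_, _, _, _, _, hr⟩ => hr ▸ norm_nonneg _

theorem norm_apply_le_numRadius (T : X →L[𝕜] X) {x : X} {f : StrongDual 𝕜 X} (hx : ‖x‖ = 1)
    (hf : ‖f‖ = 1) (hfx : f x = 1) : ‖f (T x)‖ ≤ numRadius 𝕜 X T :=
  le_csSup ⟨‖T‖, fun _ ⟨_, _, hx, hf, _, hr⟩ => hr ▸ norm_apply_apply_le_opNorm T hx hf⟩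
    ⟨x, f, hx, hf, hfx, rfl⟩

theorem norm_apply_le_numRadius_mul (T : X →L[𝕜] X) {x : X} {f : StrongDual 𝕜 X}
    (hfx : f x = ((‖f‖ * ‖x‖ : ℝ) : 𝕜)) : ‖f (T x)‖ ≤ numRadius 𝕜 X T * (‖f‖ * ‖x‖) := by
  rcases eq_or_ne x 0 with rfl | hx
  · simp
  rcases eq_or_ne f 0 with rfl | hf
  · simp
  have hx' : 0 < ‖x‖ := norm_pos_iff.2 hx
  have hf' : 0 < ‖f‖ := norm_pos_iff.2 hf
  have hx'' : (‖x‖ : 𝕜) ≠ 0 := RCLike.ofReal_ne_zero.2 hx'.ne'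
  have hf'' : (‖f‖ : 𝕜) ≠ 0 := RCLike.ofReal_ne_zero.2 hf'.ne'
  have key := norm_apply_le_numRadius T (x := (‖x‖⁻¹ : 𝕜) • x) (f := (‖f‖⁻¹ : 𝕜) • f)
    (by simp [norm_smul, hx'.ne']) (by simp [norm_smul, hf'.ne'])
    (by simp only [FunLike.coe_smul, Pi.smul_apply, map_smul, hfx, smul_eq_mul, RCLike.ofReal_mul]
        field_simp)
  simp only [map_smul, FunLike.coe_smul, Pi.smul_apply, smul_eq_mul, norm_mul,
    norm_inv, RCLike.norm_ofReal, abs_norm] at key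
  rw [← mul_assoc, ← mul_inv, inv_mul_le_iff₀ (by positivity)] at key
  linarith

theorem numIndex_le_numRadius {T : X →L[𝕜] X} (hT : ‖T‖ = 1) :
    numIndex 𝕜 X ≤ numRadius 𝕜 X T :=
  csInf_le ⟨0, fun _ ⟨S, _, hr⟩ => hr ▸ numRadius_nonneg S⟩ ⟨T, hT, rfl⟩

theorem le_numIndex [Nontrivial X] {C : ℝ} (h : ∀ T : X →L[𝕜] X, ‖T‖ = 1 → C ≤ numRadius 𝕜 X T) :
    C ≤ numIndex 𝕜 X :=
  le_csInf ⟨_, _, ContinuousLinearMap.norm_id, rfl⟩ fun _ ⟨T, hT, hr⟩ => hr ▸ h T hT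

end General

theorem ContinuousLinearMap.apply_eq_of_hasDerivAt_norm_add_smul {E : Type*}
    [NormedAddCommGroup E] [NormedSpace ℝ E] {f : StrongDual ℝ E} {x w : E} {L : ℝ}
    (hf : ‖f‖ ≤ 1) (hfx : f x = ‖x‖) (hL : HasDerivAt (fun h : ℝ => ‖x + h • w‖) L 0) :
    f w = L := by
  have hmin : IsLocalMin (fun h : ℝ => ‖x + h • w‖ - h * f w) 0 :=
    Filter.Eventually.of_forall fun h => by
      have := (le_abs_self _).trans ((f.le_opNorm (x + h • w)).trans
        (mul_le_of_le_one_left (norm_nonneg _) hf))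
      simp only [map_add, map_smul, hfx, smul_eq_mul] at this
      simp only [zero_smul, add_zero, zero_mul, sub_zero]
      linarith
  have := hmin.hasDerivAt_eq_zero (hL.sub ((hasDerivAt_id 0).mul_const (f w)))
  rw [one_mul, sub_eq_zero] at this
  exact this.symm

theorem Real.rpow_sub_one_mul_self {x p : ℝ} (hx : 0 ≤ x) (hp : p ≠ 0) :
    x ^ (p - 1) * x = x ^ p := by
  conv_rhs => rw [← sub_add_cancel p 1, Real.rpow_add' hx (by simpa using hp), Real.rpow_one]

theorem abs_add_abs_le_of_abs_add_le_of_abs_sub_le {x y V : ℝ} (h₁ : |x + y| ≤ V)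
    (h₂ : |x - y| ≤ V) : |x| + |y| ≤ V := by
  rw [abs_le] at h₁ h₂
  rcases abs_cases x with ⟨hx, -⟩ | ⟨hx, -⟩ <;> rcases abs_cases y with ⟨hy, -⟩ | ⟨hy, -⟩ <;>
    linarith

theorem abs_sub_mul_max_abs_le {α β b c V : ℝ} (hα : 0 ≤ α) (hβ : 0 ≤ β)
    (h₁ : |α * b + β * c| ≤ V) (h₂ : |β * b + α * c| ≤ V) : |α - β| * max |b| |c| ≤ V := by
  wlog hβα : β ≤ α generalizing α β
  · rw [abs_sub_comm]; exact this hβ hα h₂ h₁ (le_of_not_ge hβα)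
  rw [abs_of_nonneg (sub_nonneg.2 hβα)]
  have hb := abs_sub_abs_le_abs_sub (α * b) (-(β * c))
  have hc := abs_sub_abs_le_abs_sub (α * c) (-(β * b))
  rw [sub_neg_eq_add] at hb
  rw [sub_neg_eq_add, add_comm] at hc
  simp only [abs_neg, abs_mul, abs_of_nonneg hα, abs_of_nonneg hβ] at hb hc
  rcases le_total |c| |b| with h | h
  · rw [max_eq_left h]; nlinarith [mul_le_mul_of_nonneg_left h hβ]
  · rw [max_eq_right h]; nlinarith [mul_le_mul_of_nonneg_left h hβ]

theorem rpow_sub_one_mul_add_le {p α β u w : ℝ} (hp : 1 ≤ p) (hα : 0 ≤ α) (hβ : 0 ≤ β)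
    (hu : 0 ≤ u) (hw : 0 ≤ w) :
    α ^ (p - 1) * u + β ^ (p - 1) * w
      ≤ (α ^ p + β ^ p) ^ ((p - 1) / p) * (u ^ p + w ^ p) ^ (1 / p) := by
  rcases hp.eq_or_lt with rfl | hp
  · simp
  have hq : (p / (p - 1)).HolderConjugate p := (Real.HolderConjugate.conjExponent hp).symm
  have key := Real.inner_le_Lp_mul_Lq_of_nonneg Finset.univ hq (f := ![α ^ (p - 1), β ^ (p - 1)])
    (g := ![u, w]) (by simp [Fin.forall_fin_two, Real.rpow_nonneg hα, Real.rpow_nonneg hβ])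
    (by simp [Fin.forall_fin_two, hu, hw])
  have hpow : ∀ x : ℝ, 0 ≤ x → (x ^ (p - 1)) ^ (p / (p - 1)) = x ^ p := fun x hx => by
    rw [← Real.rpow_mul hx, mul_div_cancel₀ _ (sub_pos.2 hp).ne']
  simpa [Fin.sum_univ_two, hpow α hα, hpow β hβ, one_div_div, div_sub_div_same,
    sub_div' (sub_pos.2 hp).ne'] using key

noncomputable def lpTwoConst (p : ℝ) : ℝ :=
  sSup {r : ℝ | ∃ t ∈ Set.Icc (0:ℝ) 1, r = |t ^ (p - 1) - t| / (1 + t ^ p)}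

section LpTwoConst

variable {p : ℝ}

theorem abs_rpow_sub_one_sub_div_le_one (hp : 1 ≤ p) {t : ℝ} (ht : t ∈ Set.Icc (0:ℝ) 1) :
    |t ^ (p - 1) - t| / (1 + t ^ p) ≤ 1 := by
  have h₁ : t ^ (p - 1) ≤ 1 := Real.rpow_le_one ht.1 ht.2 (by linarith)
  have h₂ : 0 ≤ t ^ (p - 1) := Real.rpow_nonneg ht.1 _
  have h₃ : 0 ≤ t ^ p := Real.rpow_nonneg ht.1 _
  rw [div_le_one (by positivity), abs_le]
  constructor <;> linarith [ht.1, ht.2]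

theorem le_lpTwoConst (hp : 1 ≤ p) {t : ℝ} (ht : t ∈ Set.Icc (0:ℝ) 1) :
    |t ^ (p - 1) - t| / (1 + t ^ p) ≤ lpTwoConst p :=
  le_csSup ⟨1, fun _ ⟨_, hs, hr⟩ => hr ▸ abs_rpow_sub_one_sub_div_le_one hp hs⟩ ⟨t, ht, rfl⟩

theorem lpTwoConst_le_one (hp : 1 ≤ p) : lpTwoConst p ≤ 1 :=
  Real.sSup_le (fun _ ⟨_, ht, hr⟩ => hr ▸ abs_rpow_sub_one_sub_div_le_one hp ht) zero_le_one

theorem lpTwoConst_nonneg : 0 ≤ lpTwoConst p :=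
  Real.sSup_nonneg fun _ ⟨_, ht, hr⟩ => hr ▸ div_nonneg (abs_nonneg _)
    (add_nonneg zero_le_one (Real.rpow_nonneg ht.1 _))

theorem lpTwoConst_mul_le {B V : ℝ} (hB : 0 ≤ B) (hV : 0 ≤ V)
    (h : ∀ t ∈ Set.Icc (0:ℝ) 1, |t ^ (p - 1) - t| * B ≤ V * (1 + t ^ p)) :
    lpTwoConst p * B ≤ V := by
  rcases hB.eq_or_lt with rfl | hB
  · simpa using hV
  rw [← le_div_iff₀ hB]
  refine Real.sSup_le (fun _ ⟨t, ht, hr⟩ => ?_) (div_nonneg hV hB.le)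
  rw [hr, div_le_div_iff₀ (add_pos_of_pos_of_nonneg one_pos (Real.rpow_nonneg ht.1 _)) hB]
  exact h t ht

theorem abs_mul_mul_rpow_sub_le_lpTwoConst (hp : 1 < p) {α β : ℝ} (hα : 0 ≤ α) (hβ : 0 ≤ β)
    (h : α ^ p + β ^ p = 1) : |α * β * (β ^ (p - 2) - α ^ (p - 2))| ≤ lpTwoConst p := by
  wlog hβα : β ≤ α generalizing α β
  · rw [show α * β * (β ^ (p - 2) - α ^ (p - 2)) = -(β * α * (α ^ (p - 2) - β ^ (p - 2))) by ring,
      abs_neg]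
    exact this hβ hα (by linarith) (le_of_not_ge hβα)
  have hα₀ : 0 < α := by
    refine hα.lt_of_ne fun h₀ => ?_
    subst h₀
    have : β = 0 := le_antisymm hβα hβ
    subst this
    simp [Real.zero_rpow (by linarith : p ≠ 0)] at h
  set t := β / α
  have hβt : β = t * α := (div_mul_cancel₀ β hα₀.ne').symm
  have ht : t ∈ Set.Icc (0:ℝ) 1 := ⟨div_nonneg hβ hα, div_le_one_of_le₀ hβα hα⟩
  have hαp : α ^ p * (1 + t ^ p) = 1 := by
    rw [hβt, Real.mul_rpow ht.1 hα] at h; linear_combination h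
  have key : α * β * (β ^ (p - 2) - α ^ (p - 2)) = α ^ p * (t ^ (p - 1) - t) := by
    have h₁ := Real.rpow_sub_one_mul_self ht.1 (show p - 1 ≠ 0 by linarith)
    have h₂ := Real.rpow_sub_one_mul_self hα (show p - 1 ≠ 0 by linarith)
    have h₃ := Real.rpow_sub_one_mul_self hα (show p ≠ 0 by linarith)
    rw [show p - 1 - 1 = p - 2 by ring] at h₁ h₂
    rw [hβt, Real.mul_rpow ht.1 hα]
    linear_combination (α ^ 2 * α ^ (p - 2)) * h₁ + (t ^ (p - 1) * α - t * α) * h₂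
      + (t ^ (p - 1) - t) * h₃
  calc |α * β * (β ^ (p - 2) - α ^ (p - 2))| = |t ^ (p - 1) - t| / (1 + t ^ p) := by
        rw [key, abs_mul, abs_of_nonneg (Real.rpow_nonneg hα _), eq_div_iff (by positivity),
          mul_comm, ← mul_assoc, mul_comm _ (α ^ p), hαp, one_mul]
    _ ≤ lpTwoConst p := le_lpTwoConst hp.le ht

end LpTwoConst

theorem PiLp.norm_le_norm_of_forall_le {p : ℝ≥0∞} [Fact (1 ≤ p)] {ι : Type*} [Fintype ι]
    {β : ι → Type*} [∀ i, SeminormedAddCommGroup (β i)] {x y : PiLp p β}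
    (h : ∀ i, ‖x i‖ ≤ ‖y i‖) : ‖x‖ ≤ ‖y‖ := by
  rcases p.dichotomy with rfl | hp
  · simp only [PiLp.norm_eq_ciSup]
    exact ciSup_mono (Set.finite_range _).bddAbove h
  · have hp₀ : 0 < p.toReal := by linarith
    rw [PiLp.norm_eq_sum hp₀, PiLp.norm_eq_sum hp₀]
    gcongr with i
    exact h i

theorem PiLp.map_eq_sum_smul_single {p : ℝ≥0∞} {ι 𝕜 M F : Type*} [Fintype ι] [DecidableEq ι]
    [Ring 𝕜] [AddCommMonoid M] [Module 𝕜 M] [FunLike F (PiLp p fun _ : ι => 𝕜) M]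
    [LinearMapClass F 𝕜 _ M] (T : F) (y : PiLp p fun _ : ι => 𝕜) :
    T y = ∑ i, y i • T (PiLp.single p i 1) := by
  conv_lhs => rw [← (PiLp.basisFun p 𝕜 ι).sum_repr y]
  simp [map_sum, map_smul]

section LpTwo

variable {p : ℝ}

local notation "ℓp²" => PiLp (ENNReal.ofReal p) (fun _ : Fin 2 => ℝ)

noncomputable def coordFunctional (u w : ℝ) : StrongDual ℝ ℓp² :=
  u • PiLp.proj _ (fun _ => ℝ) 0 + w • PiLp.proj _ (fun _ => ℝ) 1

@[simp]
theorem coordFunctional_apply (u w : ℝ) (y : ℓp²) :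
    coordFunctional u w y = u * y 0 + w * y 1 := rfl

variable [Fact (1 ≤ ENNReal.ofReal p)]

theorem one_le_of_fact_one_le_ofReal : 1 ≤ p := ENNReal.one_le_ofReal.1 Fact.out

theorem norm_rpow_eq (y : ℓp²) : ‖y‖ ^ p = |y 0| ^ p + |y 1| ^ p := by
  have hp : 0 < p := by linarith [one_le_of_fact_one_le_ofReal (p := p)]
  rw [PiLp.norm_eq_sum (by rwa [ENNReal.toReal_ofReal hp.le]), ENNReal.toReal_ofReal hp.le,
    Fin.sum_univ_two,
    one_div, Real.rpow_inv_rpow (by positivity) hp.ne']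
  rfl

local notation "e₀" => (PiLp.single (ENNReal.ofReal p) (0 : Fin 2) (1 : ℝ) : ℓp²)
local notation "e₁" => (PiLp.single (ENNReal.ofReal p) (1 : Fin 2) (1 : ℝ) : ℓp²)

theorem norm_eq_rpow_inv (y : ℓp²) : ‖y‖ = (|y 0| ^ p + |y 1| ^ p) ^ (1 / p) := by
  have hp : 0 < p := by linarith [one_le_of_fact_one_le_ofReal (p := p)]
  rw [← norm_rpow_eq, one_div, Real.rpow_rpow_inv (norm_nonneg _) hp.ne']

theorem norm_le_norm_of_abs_le_swap {x y : ℓp²} (h₀ : |x 0| ≤ |y 1|) (h₁ : |x 1| ≤ |y 0|) :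
    ‖x‖ ≤ ‖y‖ := by
  have hp : 0 < p := by linarith [one_le_of_fact_one_le_ofReal (p := p)]
  rw [← Real.rpow_le_rpow_iff (norm_nonneg _) (norm_nonneg _) hp, norm_rpow_eq, norm_rpow_eq,
    add_comm (|y 0| ^ p)]
  gcongr

theorem norm_coordFunctional_le {α β s : ℝ} (hα : 0 ≤ α) (hβ : 0 ≤ β) (hs : |s| = 1) :
    ‖(coordFunctional (α ^ (p - 1)) (s * β ^ (p - 1)) : StrongDual ℝ ℓp²)‖
      ≤ (α ^ p + β ^ p) ^ ((p - 1) / p) := by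
  refine ContinuousLinearMap.opNorm_le_bound _ (by positivity) fun y => ?_
  rw [norm_eq_rpow_inv y, coordFunctional_apply, Real.norm_eq_abs]
  calc _ ≤ α ^ (p - 1) * |y 0| + β ^ (p - 1) * |y 1| := by
        refine (abs_add_le _ _).trans_eq ?_
        rw [abs_mul, abs_mul, abs_mul, hs, abs_of_nonneg (Real.rpow_nonneg hα _),
          abs_of_nonneg (Real.rpow_nonneg hβ _), one_mul]
    _ ≤ _ := rpow_sub_one_mul_add_le one_le_of_fact_one_le_ofReal hα hβ (abs_nonneg _)
        (abs_nonneg _)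

theorem coordFunctional_apply_toLp {α β s : ℝ} (hα : 0 ≤ α) (hβ : 0 ≤ β) (hs : |s| = 1) :
    coordFunctional (α ^ (p - 1)) (s * β ^ (p - 1)) (WithLp.toLp _ ![α, s * β] : ℓp²)
      = α ^ p + β ^ p := by
  have hp : p ≠ 0 := by linarith [one_le_of_fact_one_le_ofReal (p := p)]
  have hss : s * s = 1 := by rw [← abs_mul_abs_self, hs, one_mul]
  simp only [coordFunctional_apply, Matrix.cons_val_zero, Matrix.cons_val_one]
  linear_combination Real.rpow_sub_one_mul_self hα hp + Real.rpow_sub_one_mul_self hβ hp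
    + (β ^ (p - 1) * β) * hss

theorem abs_coordFunctional_apply_le_numRadius_mul (T : ℓp² →L[ℝ] ℓp²) {α β s : ℝ}
    (hα : 0 ≤ α) (hβ : 0 ≤ β) (hs : |s| = 1) :
    |coordFunctional (α ^ (p - 1)) (s * β ^ (p - 1)) (T (WithLp.toLp _ ![α, s * β]))|
      ≤ numRadius ℝ ℓp² T * (α ^ p + β ^ p) := by
  set x : ℓp² := WithLp.toLp _ ![α, s * β]
  set f : StrongDual ℝ ℓp² := coordFunctional (α ^ (p - 1)) (s * β ^ (p - 1))
  have hN : 0 ≤ α ^ p + β ^ p := by positivity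
  have hx : ‖x‖ = (α ^ p + β ^ p) ^ (1 / p) := by
    simp [norm_eq_rpow_inv, x, abs_mul, hs, abs_of_nonneg hα, abs_of_nonneg hβ]
  have hexp : (p - 1) / p + 1 / p = 1 := by
    rw [← add_div, sub_add_cancel, div_self (by linarith [one_le_of_fact_one_le_ofReal (p := p)])]
  have hfx : f x = ‖f‖ * ‖x‖ := by
    refine le_antisymm ((le_abs_self _).trans (f.le_opNorm x)) ?_
    calc ‖f‖ * ‖x‖ ≤ (α ^ p + β ^ p) ^ ((p - 1) / p) * (α ^ p + β ^ p) ^ (1 / p) := by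
          rw [hx]; gcongr; exact norm_coordFunctional_le hα hβ hs
      _ = f x := by
          rw [← Real.rpow_add' hN (by rw [hexp]; exact one_ne_zero), hexp, Real.rpow_one,
            coordFunctional_apply_toLp hα hβ hs]
  have := norm_apply_le_numRadius_mul T (x := x) (f := f) (by exact_mod_cast hfx)
  rwa [← hfx, coordFunctional_apply_toLp hα hβ hs, Real.norm_eq_abs] at this

theorem abs_add_abs_le_numRadius_mul (T : ℓp² →L[ℝ] ℓp²) {α β : ℝ} (hα : 0 ≤ α) (hβ : 0 ≤ β) :
    |α ^ p * T e₀ 0 + β ^ p * T e₁ 1| + |α ^ (p - 1) * β * T e₁ 0 + β ^ (p - 1) * α * T e₀ 1|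
      ≤ numRadius ℝ ℓp² T * (α ^ p + β ^ p) := by
  have hp : p ≠ 0 := by linarith [one_le_of_fact_one_le_ofReal (p := p)]
  have key : ∀ s : ℝ, |s| = 1 →
      |α ^ p * T e₀ 0 + β ^ p * T e₁ 1 + s * (α ^ (p - 1) * β * T e₁ 0 + β ^ (p - 1) * α * T e₀ 1)|
        ≤ numRadius ℝ ℓp² T * (α ^ p + β ^ p) := by
    intro s hs
    have hss : s * s = 1 := by rw [← abs_mul_abs_self, hs, one_mul]
    convert abs_coordFunctional_apply_le_numRadius_mul T hα hβ hs using 2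
    rw [PiLp.map_eq_sum_smul_single T (WithLp.toLp _ ![α, s * β]), Fin.sum_univ_two]
    simp only [Matrix.cons_val_zero, Matrix.cons_val_one, coordFunctional_apply, PiLp.add_apply,
      PiLp.smul_apply, smul_eq_mul]
    linear_combination (-T e₀ 0) * Real.rpow_sub_one_mul_self hα hp
      + (-T e₁ 1) * Real.rpow_sub_one_mul_self hβ hp - (β ^ (p - 1) * β * T e₁ 1) * hss
  exact abs_add_abs_le_of_abs_add_le_of_abs_sub_le (by simpa using key 1 abs_one)
    (by simpa [sub_eq_add_neg] using key (-1) (by simp))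

theorem opNorm_le_max_add_max (T : ℓp² →L[ℝ] ℓp²) :
    ‖T‖ ≤ max |T e₀ 0| |T e₁ 1| + max |T e₁ 0| |T e₀ 1| := by
  refine T.opNorm_le_bound (by positivity) fun y => ?_
  set A := max |T e₀ 0| |T e₁ 1|
  set B := max |T e₁ 0| |T e₀ 1|
  have hA : 0 ≤ A := (abs_nonneg _).trans (le_max_left _ _)
  have hB : 0 ≤ B := (abs_nonneg _).trans (le_max_left _ _)
  have hdiag : ‖(WithLp.toLp _ ![y 0 * T e₀ 0, y 1 * T e₁ 1] : ℓp²)‖ ≤ ‖A • y‖ := by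
    refine PiLp.norm_le_norm_of_forall_le fun i => ?_
    fin_cases i <;> simp only [Fin.zero_eta, Fin.mk_one, Matrix.cons_val_zero, Matrix.cons_val_one,
      PiLp.smul_apply, smul_eq_mul, Real.norm_eq_abs, abs_mul, abs_of_nonneg hA, mul_comm |y _|] <;>
      gcongr
    exacts [le_max_left _ _, le_max_right _ _]
  have hanti : ‖(WithLp.toLp _ ![y 1 * T e₁ 0, y 0 * T e₀ 1] : ℓp²)‖ ≤ ‖B • y‖ := by
    refine norm_le_norm_of_abs_le_swap ?_ ?_ <;>
      simp only [Matrix.cons_val_zero, Matrix.cons_val_one, PiLp.smul_apply,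
        smul_eq_mul, abs_mul, abs_of_nonneg hB, mul_comm |y _|] <;> gcongr
    exacts [le_max_left _ _, le_max_right _ _]
  calc ‖T y‖ = ‖(WithLp.toLp _ ![y 0 * T e₀ 0, y 1 * T e₁ 1] : ℓp²)
        + WithLp.toLp _ ![y 1 * T e₁ 0, y 0 * T e₀ 1]‖ := by
        congr 1
        ext i
        fin_cases i
        · simp [PiLp.map_eq_sum_smul_single T y, Fin.sum_univ_two]
        · simp [PiLp.map_eq_sum_smul_single T y, Fin.sum_univ_two, add_comm]
    _ ≤ ‖A • y‖ + ‖B • y‖ := (norm_add_le _ _).trans (add_le_add hdiag hanti)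
    _ = (A + B) * ‖y‖ := by
        rw [norm_smul, norm_smul, Real.norm_of_nonneg hA, Real.norm_of_nonneg hB, add_mul]

theorem lpTwoConst_le_two_mul_numRadius (T : ℓp² →L[ℝ] ℓp²) (hT : ‖T‖ = 1) :
    lpTwoConst p ≤ 2 * numRadius ℝ ℓp² T := by
  have hp := one_le_of_fact_one_le_ofReal (p := p)
  have hp₀ : p ≠ 0 := by linarith
  have hA : max |T e₀ 0| |T e₁ 1| ≤ numRadius ℝ ℓp² T := by
    have h₀ := abs_add_abs_le_numRadius_mul T zero_le_one le_rfl
    have h₁ := abs_add_abs_le_numRadius_mul T le_rfl zero_le_one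
    simp only [Real.one_rpow, Real.zero_rpow hp₀, zero_mul, add_zero, zero_add, one_mul,
      mul_one] at h₀ h₁
    exact max_le ((le_add_of_nonneg_right (abs_nonneg _)).trans h₀)
      ((le_add_of_nonneg_right (abs_nonneg _)).trans h₁)
  have hB : lpTwoConst p * max |T e₁ 0| |T e₀ 1| ≤ numRadius ℝ ℓp² T := by
    refine lpTwoConst_mul_le ((abs_nonneg _).trans (le_max_left _ _)) (numRadius_nonneg T)
      fun t ht => ?_
    have h₀ := abs_add_abs_le_numRadius_mul T ht.1 zero_le_one
    have h₁ := abs_add_abs_le_numRadius_mul T zero_le_one ht.1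
    simp only [Real.one_rpow, one_mul, mul_one] at h₀ h₁
    refine abs_sub_mul_max_abs_le (Real.rpow_nonneg ht.1 _) ht.1 ?_ ?_
    · linarith [abs_nonneg (t ^ p * T e₀ 0 + T e₁ 1)]
    · linarith [abs_nonneg (T e₀ 0 + t ^ p * T e₁ 1)]
  set A := max |T e₀ 0| |T e₁ 1|
  set B := max |T e₁ 0| |T e₀ 1|
  set v := numRadius ℝ ℓp² T
  have hAB : 1 ≤ A + B := hT ▸ opNorm_le_max_add_max T
  calc lpTwoConst p ≤ lpTwoConst p * (A + B) := le_mul_of_one_le_right lpTwoConst_nonneg hAB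
    _ = lpTwoConst p * A + lpTwoConst p * B := mul_add _ _ _
    _ ≤ A + v := add_le_add (mul_le_of_le_one_left ((abs_nonneg _).trans (le_max_left _ _))
        (lpTwoConst_le_one hp)) hB
    _ ≤ 2 * v := by linarith

variable (p) in
noncomputable def rot : ℓp² →L[ℝ] ℓp² :=
  (PiLp.proj _ (fun _ => ℝ) 0).smulRight e₁ - (PiLp.proj _ (fun _ => ℝ) 1).smulRight e₀

@[simp]
theorem rot_apply_zero (y : ℓp²) : rot p y 0 = -y 1 := by simp [rot]

@[simp]
theorem rot_apply_one (y : ℓp²) : rot p y 1 = y 0 := by simp [rot]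

theorem norm_rot : ‖rot p‖ = 1 := by
  refine le_antisymm ((rot p).opNorm_le_bound zero_le_one fun y => ?_) ?_
  · rw [one_mul]; exact norm_le_norm_of_abs_le_swap (by simp) (by simp)
  · have h := (rot p).le_opNorm e₀
    rwa [show rot p e₀ = e₁ by ext i; fin_cases i <;> simp, PiLp.norm_single, PiLp.norm_single,
      norm_one, mul_one] at h

theorem hasDerivAt_norm_add_smul_rot (hp : 1 < p) {x : ℓp²} (hx : ‖x‖ = 1) :
    HasDerivAt (fun h : ℝ => ‖x + h • rot p x‖)
      (x 0 * x 1 * (|x 1| ^ (p - 2) - |x 0| ^ (p - 2))) 0 := by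
  have h₀ : HasDerivAt (fun h : ℝ => |x 0 - h * x 1| ^ p) (p * |x 0| ^ (p - 2) * x 0 * -x 1) 0 :=
    (hasDerivAt_abs_rpow (x 0) hp).comp_of_eq 0
      (by simpa using ((hasDerivAt_id (0:ℝ)).mul_const (x 1)).const_sub (x 0)) (by simp)
  have h₁ : HasDerivAt (fun h : ℝ => |x 1 + h * x 0| ^ p) (p * |x 1| ^ (p - 2) * x 1 * x 0) 0 :=
    (hasDerivAt_abs_rpow (x 1) hp).comp_of_eq 0
      (by simpa using ((hasDerivAt_id (0:ℝ)).mul_const (x 0)).const_add (x 1)) (by simp)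
  have hN : |x 0 - 0 * x 1| ^ p + |x 1 + 0 * x 0| ^ p = 1 := by
    simpa [hx] using (norm_rpow_eq x).symm
  have hsum : HasDerivAt (fun h : ℝ => |x 0 - h * x 1| ^ p + |x 1 + h * x 0| ^ p)
      (p * |x 0| ^ (p - 2) * x 0 * -x 1 + p * |x 1| ^ (p - 2) * x 1 * x 0) 0 := h₀.add h₁
  have := hsum.rpow_const (p := 1 / p) (Or.inl (by rw [hN]; exact one_ne_zero))
  rw [hN, Real.one_rpow, mul_one] at this
  convert this using 1
  · funext h
    rw [norm_eq_rpow_inv]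
    simp [sub_eq_add_neg]
  · field_simp
    ring

theorem numRadius_rot_le : numRadius ℝ ℓp² (rot p) ≤ lpTwoConst p := by
  rcases (one_le_of_fact_one_le_ofReal (p := p)).eq_or_lt with hp | hp
  · refine (numRadius_le_opNorm (rot p)).trans (norm_rot.trans_le ?_)
    simpa [← hp] using le_lpTwoConst hp.le (t := 0) ⟨le_rfl, zero_le_one⟩
  refine numRadius_le_of_forall (rot p) lpTwoConst_nonneg fun x f hx hf hfx => ?_
  rw [f.apply_eq_of_hasDerivAt_norm_add_smul hf.le (by rw [hfx, hx])
    (hasDerivAt_norm_add_smul_rot hp hx)]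
  have hsum : |x 0| ^ p + |x 1| ^ p = 1 := by rw [← norm_rpow_eq, hx, Real.one_rpow]
  simpa [abs_mul] using abs_mul_mul_rpow_sub_le_lpTwoConst hp (abs_nonneg _) (abs_nonneg _) hsum

end LpTwo

theorem numIndex_lp_two_dim_bounds_general (p : ℝ) [Fact (1 ≤ ENNReal.ofReal p)] :
    (1 / 2) * sSup {r : ℝ | ∃ t ∈ Set.Icc (0:ℝ) 1, r = |t ^ (p - 1) - t| / (1 + t ^ p)}
      ≤ numIndex ℝ (PiLp (ENNReal.ofReal p) (fun _ : Fin 2 => ℝ)) ∧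
    numIndex ℝ (PiLp (ENNReal.ofReal p) (fun _ : Fin 2 => ℝ))
      ≤ sSup {r : ℝ | ∃ t ∈ Set.Icc (0:ℝ) 1, r = |t ^ (p - 1) - t| / (1 + t ^ p)} := by
  refine ⟨le_numIndex fun T hT => ?_,
    (numIndex_le_numRadius (norm_rot (p := p))).trans numRadius_rot_le⟩
  have := lpTwoConst_le_two_mul_numRadius T hT
  rw [lpTwoConst] at this
  linarith

/-- For `1 ≤ p < ∞`, the numerical index of the real space `ℓ_p²` satisfies
`(1/2)·M_p ≤ n(ℓ_p²) ≤ M_p`, where `M_p = sup_{t ∈ [0,1]} |t^{p-1} − t| / (1 + t^p)`. -/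
theorem numIndex_lp_two_dim_bounds (p : ℝ) (hp : 1 ≤ p) [Fact (1 ≤ ENNReal.ofReal p)] :
    (1 / 2) * sSup {r : ℝ | ∃ t ∈ Set.Icc (0:ℝ) 1, r = |t ^ (p - 1) - t| / (1 + t ^ p)}
      ≤ numIndex ℝ (PiLp (ENNReal.ofReal p) (fun _ : Fin 2 => ℝ)) ∧
    numIndex ℝ (PiLp (ENNReal.ofReal p) (fun _ : Fin 2 => ℝ))
      ≤ sSup {r : ℝ | ∃ t ∈ Set.Icc (0:ℝ) 1, r = |t ^ (p - 1) - t| / (1 + t ^ p)} :=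
  numIndex_lp_two_dim_bounds_general p
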